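/- arXiv:1505.02839 — 2 statements merged into one kernel-verified Lean document; each statement's English description precedes it below -/
import Mathlib

section
/- Let (X,d) be a compact metric space and let ξ = ξ(x,ω) be a jointly measurable random field on X defined on a probability space (Ω,B,P) whose sample paths are almost surely continuous. Let Φ be an Orlicz function (not necessarily satisfying the Δ₂ condition) such that the Luxemburg norm ‖ sup_{x∈X} |ξ(x)| ‖_Φ is finite, and let Ψ be another Orlicz function that is weaker than Φ. Then there exist a scaling function h on [0, diam(X)] (depending on Φ and Ψ) and a non-negative random variable ζ with ‖ζ‖_Ψ = 1 such that, almost surely, Δ(ξ(·,ω), δ) ≤ ζ(ω) · h(δ) for every δ ∈ [0, diam(X)]. -/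
open MeasureTheory Filter Set
open scoped ENNReal NNReal

/-- The modulus of continuity `Δ(f, δ)` of a function `f` on a metric space. -/
noncomputable def modCont {X : Type*} [MetricSpace X] (f : X → ℝ) (δ : ℝ) : ℝ :=
  sSup {r : ℝ | ∃ x y : X, dist x y ≤ δ ∧ r = |f x - f y|}

/-- An Orlicz (Young) function: even, convex, continuous, strictly increasing on `[0,∞)`,
vanishing at `0`, and tending to `∞` at `∞`. -/
structure IsOrliczFunction (Φ : ℝ → ℝ) : Prop where
  even : ∀ u, Φ (-u) = Φ u
  nonneg : ∀ u, 0 ≤ Φ u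
  convexOn : ConvexOn ℝ Set.univ Φ
  continuous : Continuous Φ
  strictMonoOn : StrictMonoOn Φ (Set.Ici 0)
  map_zero : Φ 0 = 0
  tendsto_atTop : Filter.Tendsto Φ Filter.atTop Filter.atTop

/-- The `Δ₂` condition: `limsup_{u→∞} Φ(2u)/Φ(u) < ∞`. -/
def OrliczDelta2 (Φ : ℝ → ℝ) : Prop :=
  ∃ C : ℝ, ∀ᶠ u in Filter.atTop, Φ (2 * u) ≤ C * Φ u

/-- The Luxemburg norm of a random variable `ζ` with respect to the Orlicz function `Φ`,
with value `∞` when `ζ` belongs to no ball of the Orlicz space. -/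
noncomputable def luxNorm {Ω : Type*} [MeasurableSpace Ω] (P : Measure Ω)
    (Φ : ℝ → ℝ) (ζ : Ω → ℝ) : ℝ≥0∞ :=
  sInf {c : ℝ≥0∞ | 0 < c ∧ c ≠ ∞ ∧
    ∫⁻ ω, ENNReal.ofReal (Φ (|ζ ω| / c.toReal)) ∂P ≤ 1}

/-- A scaling function on `[0, D]`: continuous, non-negative, nondecreasing, vanishing at `0`. -/
def IsScalingFunction (g : ℝ → ℝ) (D : ℝ) : Prop :=
  ContinuousOn g (Set.Icc 0 D) ∧ (∀ δ ∈ Set.Icc 0 D, 0 ≤ g δ) ∧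
    MonotoneOn g (Set.Icc 0 D) ∧ g 0 = 0

/-- `Ψ` is weaker than `Φ` (`Ψ << Φ`): for every `v > 0`, `Ψ(uv)/Φ(u) → 0` as `u → ∞`. -/
def OrliczWeaker (Ψ Φ : ℝ → ℝ) : Prop :=
  ∀ v : ℝ, 0 < v →
    Filter.Tendsto (fun u => Ψ (u * v) / Φ u) Filter.atTop (nhds 0)

/-!
Restricted to a countable dense set `s ⊆ X`, the sup norm `S` and the modulus of continuity
`M(t)` of the paths become measurable. Since `Ψ << Φ` and `‖sup |ξ|‖_Φ < ∞`, `E Ψ(a (1 + S)) < ∞`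
for every `a > 0`, so dominated convergence gives scales `dₙ → 0` with `E Ψ(2ⁿ⁺¹ M(dₙ)) ≤ 2⁻ⁿ`.
Then `ζ = max (2 + 2S) (supₙ 2ⁿ⁺¹ M(dₙ))` has `E Ψ(ζ) ≤ E Ψ(2 + 2S) + 2 < ∞` because
`Ψ(sup) ≤ Σ Ψ`, and `M(δ) ≤ ζ h(δ)` for `h(δ) = Σₙ 2⁻ⁿ min(1, δ / dₙ)`. Dividing `ζ` by its
Luxemburg norm (finite by convexity of `Ψ`, positive as `ζ ≥ 1`) normalizes it.
-/

open Topology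

namespace IsOrliczFunction

variable {Ψ : ℝ → ℝ}

lemma apply_le_apply (hΨ : IsOrliczFunction Ψ) {a b : ℝ} (ha : 0 ≤ a) (hab : a ≤ b) :
    Ψ a ≤ Ψ b :=
  hΨ.strictMonoOn.monotoneOn ha (ha.trans hab) hab

lemma apply_pos (hΨ : IsOrliczFunction Ψ) {u : ℝ} (hu : 0 < u) : 0 < Ψ u := by
  simpa [hΨ.map_zero] using hΨ.strictMonoOn (mem_Ici.2 le_rfl) (mem_Ici.2 hu.le) hu

lemma apply_abs (hΨ : IsOrliczFunction Ψ) (u : ℝ) : Ψ |u| = Ψ u := by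
  rcases abs_choice u with h | h <;> simp [h, hΨ.even]

lemma apply_mul_le (hΨ : IsOrliczFunction Ψ) {t : ℝ} (ht₀ : 0 ≤ t) (ht₁ : t ≤ 1) (u : ℝ) :
    Ψ (t * u) ≤ t * Ψ u := by
  simpa [hΨ.map_zero] using
    hΨ.convexOn.2 (mem_univ u) (mem_univ 0) ht₀ (sub_nonneg.2 ht₁) (add_sub_cancel t 1)

lemma bddAbove_range_of_summable (hΨ : IsOrliczFunction Ψ) {g : ℕ → ℝ}
    (hg : Summable fun n => Ψ (g n)) : BddAbove (range g) := by
  obtain ⟨u, hu, hu₀⟩ := ((hΨ.tendsto_atTop.eventually_gt_atTop (∑' n, Ψ (g n))).and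
    (eventually_ge_atTop 0)).exists
  refine ⟨u, forall_mem_range.2 fun n => (le_abs_self _).trans ?_⟩
  by_contra! hlt
  have := hΨ.apply_le_apply hu₀ hlt.le
  rw [hΨ.apply_abs] at this
  exact (hu.trans_le this).not_ge (hg.le_tsum n fun k _ => hΨ.nonneg _)

lemma apply_iSup_le_tsum (hΨ : IsOrliczFunction Ψ) {g : ℕ → ℝ} (hg₀ : ∀ n, 0 ≤ g n)
    (hg : Summable fun n => Ψ (g n)) : Ψ (⨆ n, g n) ≤ ∑' n, Ψ (g n) := by
  have hmono : Monotone fun u => Ψ (max u 0) := fun a b hab =>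
    hΨ.apply_le_apply (le_max_right a 0) (max_le_max hab le_rfl)
  have hcont : Continuous fun u => Ψ (max u 0) :=
    hΨ.continuous.comp (continuous_id.max continuous_const)
  have hsup := hmono.map_ciSup_of_continuousAt hcont.continuousAt (hΨ.bddAbove_range_of_summable hg)
  simp only [max_eq_left (Real.iSup_nonneg hg₀), max_eq_left (hg₀ _)] at hsup
  rw [hsup]
  exact ciSup_le fun n => hg.le_tsum n fun k _ => hΨ.nonneg _

lemma ofReal_apply_iSup_le_tsum (hΨ : IsOrliczFunction Ψ) {g : ℕ → ℝ} (hg₀ : ∀ n, 0 ≤ g n) :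
    ENNReal.ofReal (Ψ (⨆ n, g n)) ≤ ∑' n, ENNReal.ofReal (Ψ (g n)) := by
  by_cases htop : ∑' n, ENNReal.ofReal (Ψ (g n)) = ∞
  · simp [htop]
  have hg : Summable fun n => Ψ (g n) := by
    simpa [ENNReal.toReal_ofReal (hΨ.nonneg _)] using ENNReal.summable_toReal htop
  rw [← ENNReal.ofReal_tsum_of_nonneg (fun n => hΨ.nonneg _) hg]
  exact ENNReal.ofReal_le_ofReal (hΨ.apply_iSup_le_tsum hg₀ hg)

end IsOrliczFunction

section Luxemburg

variable {Ω : Type*} [MeasurableSpace Ω] {P : Measure Ω} {Ψ : ℝ → ℝ}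

lemma luxNorm_mono_ae (hΨ : IsOrliczFunction Ψ) {ζ₁ ζ₂ : Ω → ℝ}
    (h : ∀ᵐ ω ∂P, |ζ₁ ω| ≤ |ζ₂ ω|) : luxNorm P Ψ ζ₁ ≤ luxNorm P Ψ ζ₂ := by
  refine sInf_le_sInf fun c ⟨hc₀, hc, hcI⟩ => ⟨hc₀, hc, le_trans (lintegral_mono_ae ?_) hcI⟩
  filter_upwards [h] with ω hω
  exact ENNReal.ofReal_le_ofReal (hΨ.apply_le_apply (by positivity)
    (div_le_div_of_nonneg_right hω ENNReal.toReal_nonneg))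

lemma luxNorm_const_ne_zero [IsProbabilityMeasure P] (hΨ : IsOrliczFunction Ψ) {a : ℝ}
    (ha : 0 < a) : luxNorm P Ψ (fun _ => a) ≠ 0 := by
  obtain ⟨u, hu, hu₀⟩ :=
    ((hΨ.tendsto_atTop.eventually_gt_atTop 1).and (eventually_gt_atTop 0)).exists
  refine (lt_of_lt_of_le (ENNReal.ofReal_pos.2 (div_pos ha hu₀)) (le_sInf ?_)).ne'
  rintro c ⟨hc₀, hc, hcI⟩
  have hcr : 0 < c.toReal := ENNReal.toReal_pos hc₀.ne' hc
  rw [lintegral_const, measure_univ, mul_one, abs_of_pos ha, ENNReal.ofReal_le_one] at hcI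
  rw [← ENNReal.ofReal_toReal hc, ENNReal.ofReal_le_ofReal_iff hcr.le, div_le_iff₀ hu₀,
    ← div_le_iff₀' hcr]
  by_contra! hlt
  linarith [hΨ.apply_le_apply hu₀.le hlt.le]

lemma luxNorm_ne_top_of_lintegral_ne_top (hΨ : IsOrliczFunction Ψ) {ζ : Ω → ℝ}
    (h : ∫⁻ ω, ENNReal.ofReal (Ψ (ζ ω)) ∂P ≠ ∞) : luxNorm P Ψ ζ ≠ ∞ := by
  set I := ∫⁻ ω, ENNReal.ofReal (Ψ (ζ ω)) ∂P
  set r := 1 + I.toReal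
  have hr : 1 ≤ r := le_add_of_nonneg_right ENNReal.toReal_nonneg
  refine ne_top_of_le_ne_top (b := ENNReal.ofReal r) ENNReal.ofReal_ne_top
    (sInf_le ⟨ENNReal.ofReal_pos.2 (by linarith), ENNReal.ofReal_ne_top, ?_⟩)
  -- convexity: `Ψ (u / r) ≤ Ψ u / r` for `r ≥ 1`
  calc ∫⁻ ω, ENNReal.ofReal (Ψ (|ζ ω| / (ENNReal.ofReal r).toReal)) ∂P
      ≤ ∫⁻ ω, ENNReal.ofReal r⁻¹ * ENNReal.ofReal (Ψ (ζ ω)) ∂P := by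
        refine lintegral_mono fun ω => ?_
        rw [ENNReal.toReal_ofReal (by linarith), ← ENNReal.ofReal_mul (by positivity),
          div_eq_inv_mul, ← hΨ.apply_abs (ζ ω)]
        exact ENNReal.ofReal_le_ofReal
          (hΨ.apply_mul_le (by positivity) (inv_le_one_of_one_le₀ hr) _)
    _ = ENNReal.ofReal r⁻¹ * I := lintegral_const_mul' _ _ ENNReal.ofReal_ne_top
    _ ≤ ENNReal.ofReal r⁻¹ * ENNReal.ofReal r := by
        gcongr
        exact (ENNReal.le_ofReal_iff_toReal_le h (by positivity)).2 (by linarith)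
    _ = 1 := by
        rw [← ENNReal.ofReal_mul (by positivity), inv_mul_cancel₀ (by linarith), ENNReal.ofReal_one]

lemma luxNorm_div_const (ζ : Ω → ℝ) {r : ℝ} (hr : 0 < r) :
    luxNorm P Ψ (fun ω => ζ ω / r) = (ENNReal.ofReal r)⁻¹ * luxNorm P Ψ ζ := by
  have hR : IsUnit (ENNReal.ofReal r) :=
    ENNReal.isUnit_iff.2 ⟨(ENNReal.ofReal_pos.2 hr).ne', ENNReal.ofReal_ne_top⟩
  set e := (ENNReal.mulLeftOrderIso _ hR).symm
  have : luxNorm P Ψ (fun ω => ζ ω / r) = e (luxNorm P Ψ ζ) := by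
    unfold luxNorm
    rw [e.map_sInf_eq_sInf_symm_preimage]
    congr 1
    ext c
    simp only [e, OrderIso.symm_symm, mem_preimage, ENNReal.mulLeftOrderIso_apply, mem_ofPred_eq,
      ENNReal.toReal_mul, ENNReal.toReal_ofReal hr.le, abs_div, abs_of_pos hr, div_div]
    simp [ENNReal.mul_eq_top, hr]
  rw [this]
  apply (ENNReal.mulLeftOrderIso _ hR).injective
  simp [e, ← mul_assoc, ENNReal.mul_inv_cancel (ENNReal.ofReal_pos.2 hr).ne' ENNReal.ofReal_ne_top]

end Luxemburg

noncomputable def scalingSeries (d : ℕ → ℝ) (δ : ℝ) : ℝ :=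
  ∑' n, (2⁻¹ : ℝ) ^ n * max 0 (min 1 (δ / d n))

section ScalingSeries

variable {d : ℕ → ℝ}

lemma scalingSeries_term_le (d : ℕ → ℝ) (n : ℕ) (δ : ℝ) :
    ‖(2⁻¹ : ℝ) ^ n * max 0 (min 1 (δ / d n))‖ ≤ 2⁻¹ ^ n := by
  rw [Real.norm_of_nonneg (by positivity)]
  exact mul_le_of_le_one_right (by positivity) (max_le zero_le_one (min_le_left _ _))

lemma summable_scalingSeries (d : ℕ → ℝ) (δ : ℝ) :
    Summable fun n => (2⁻¹ : ℝ) ^ n * max 0 (min 1 (δ / d n)) :=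
  .of_norm_bounded (summable_geometric_of_lt_one (by norm_num) (by norm_num))
    (scalingSeries_term_le d · δ)

lemma continuous_scalingSeries (d : ℕ → ℝ) : Continuous (scalingSeries d) :=
  continuous_tsum (fun n => by fun_prop) (summable_geometric_of_lt_one (by norm_num) (by norm_num))
    (scalingSeries_term_le d)

lemma monotone_scalingSeries (hd : ∀ n, 0 ≤ d n) : Monotone (scalingSeries d) := fun δ δ' h =>
  Summable.tsum_le_tsum (fun n => by gcongr; exact hd n) (summable_scalingSeries d δ)
    (summable_scalingSeries d δ')

lemma scalingSeries_zero (d : ℕ → ℝ) : scalingSeries d 0 = 0 := by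
  simp [scalingSeries]

lemma pow_le_scalingSeries {m : ℕ} {δ : ℝ} (hd : 0 < d m) (h : d m ≤ δ) :
    (2⁻¹ : ℝ) ^ m ≤ scalingSeries d δ := by
  have hterm : (2⁻¹ : ℝ) ^ m * max 0 (min 1 (δ / d m)) = 2⁻¹ ^ m := by
    rw [min_eq_left ((one_le_div hd).2 h), max_eq_right zero_le_one, mul_one]
  exact hterm.symm.le.trans
    ((summable_scalingSeries d δ).le_tsum m fun n _ => by positivity)

lemma isScalingFunction_scalingSeries (hd : ∀ n, 0 ≤ d n) (D : ℝ) :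
    IsScalingFunction (scalingSeries d) D :=
  ⟨(continuous_scalingSeries d).continuousOn,
    fun _ hδ => (scalingSeries_zero d).symm.le.trans (monotone_scalingSeries hd hδ.1),
    (monotone_scalingSeries hd).monotoneOn _, scalingSeries_zero d⟩

/-- For `δ ∈ [dₖ₊₁, dₖ)` the term `k + 1` of the series is already `2⁻ᵏ⁻¹`, which pays for
`m δ ≤ m dₖ ≤ 2⁻ᵏ⁻¹ z`; for `δ ≥ d₀` the series is `≥ 1` and `b` pays. -/
lemma le_mul_scalingSeries {m : ℝ → ℝ} (hm : Monotone m) {b z : ℝ} (hmb : ∀ t, m t ≤ b)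
    (hbz : b ≤ z) (hz₀ : 0 ≤ z) (hd₀ : ∀ n, 0 < d n) (hd : Tendsto d atTop (𝓝 0))
    (hz : ∀ n, 2 ^ (n + 1) * m (d n) ≤ z) {δ : ℝ} (hδ : 0 < δ) :
    m δ ≤ z * scalingSeries d δ := by
  classical
  have hex : ∃ n, d n ≤ δ := (hd.eventually (Iic_mem_nhds hδ)).exists
  rcases h : Nat.find hex with _ | k
  · have h₀ : d 0 ≤ δ := h ▸ Nat.find_spec hex
    calc m δ ≤ z * 1 := by linarith [hmb δ]
      _ ≤ z * scalingSeries d δ := by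
        gcongr; simpa using pow_le_scalingSeries (hd₀ 0) h₀
  · have hk : δ < d k := not_le.1 (Nat.find_min hex (h ▸ k.lt_succ_self))
    have hk' : d (k + 1) ≤ δ := h ▸ Nat.find_spec hex
    calc m δ ≤ m (d k) := hm hk.le
      _ ≤ 2⁻¹ ^ (k + 1) * z := by
        rw [inv_pow, ← div_eq_inv_mul, le_div_iff₀ (by positivity), mul_comm]
        exact hz k
      _ ≤ z * scalingSeries d δ := by
        rw [mul_comm]; gcongr; exact pow_le_scalingSeries (hd₀ _) hk'

end ScalingSeries

lemma IsScalingFunction.const_mul {g : ℝ → ℝ} {D c : ℝ} (hg : IsScalingFunction g D)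
    (hc : 0 ≤ c) : IsScalingFunction (fun δ => c * g δ) D :=
  ⟨continuousOn_const.mul hg.1, fun δ hδ => mul_nonneg hc (hg.2.1 δ hδ),
    fun _ ha _ hb hab => mul_le_mul_of_nonneg_left (hg.2.2.1 ha hb hab) hc, by simp [hg.2.2.2]⟩

section OrliczHeart

variable {Ω : Type*} [MeasurableSpace Ω] {P : Measure Ω} {Φ Ψ : ℝ → ℝ}

def MemOrliczHeart (P : Measure Ω) (Ψ : ℝ → ℝ) (B : Ω → ℝ) : Prop :=
  ∀ a : ℝ, 0 < a → ∫⁻ ω, ENNReal.ofReal (Ψ (a * B ω)) ∂P < ∞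

lemma MemOrliczHeart.const_mul {B : Ω → ℝ} (hB : MemOrliczHeart P Ψ B) {c : ℝ} (hc : 0 < c) :
    MemOrliczHeart P Ψ fun ω => c * B ω := fun a ha => by
  simpa only [mul_assoc] using hB (a * c) (by positivity)

lemma MemOrliczHeart.mono (hΨ : IsOrliczFunction Ψ) {B₁ B₂ : Ω → ℝ}
    (hB₂ : MemOrliczHeart P Ψ B₂) (hB₁ : ∀ ω, 0 ≤ B₁ ω) (h : ∀ᵐ ω ∂P, B₁ ω ≤ B₂ ω) :
    MemOrliczHeart P Ψ B₁ := fun a ha =>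
  lt_of_le_of_lt (lintegral_mono_ae <| h.mono fun ω hω => ENNReal.ofReal_le_ofReal
    (hΨ.apply_le_apply (mul_nonneg ha.le (hB₁ ω)) (by gcongr))) (hB₂ a ha)

lemma OrliczWeaker.exists_apply_le_add (hweak : OrliczWeaker Ψ Φ) (hΦ : IsOrliczFunction Φ)
    (hΨ : IsOrliczFunction Ψ) {a c : ℝ} (ha : 0 < a) (hc : 0 < c) :
    ∃ K, ∀ s, 0 ≤ s → Ψ (a * (1 + s)) ≤ K + Φ (s / c) := by
  obtain ⟨U, hU⟩ :=
    eventually_atTop.1 ((hweak (2 * a * c) (by positivity)).eventually_lt_const one_pos)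
  set s₀ := max 1 (c * U)
  refine ⟨Ψ (a * (1 + s₀)), fun s hs => ?_⟩
  rcases le_or_gt s s₀ with hss | hss
  · exact (hΨ.apply_le_apply (by positivity) (by gcongr)).trans
      (le_add_of_nonneg_right (hΦ.nonneg _))
  have hs₁ : 1 < s := (le_max_left _ _).trans_lt hss
  have hU' : U ≤ s / c := by
    rw [le_div_iff₀ hc]; linarith [le_max_right 1 (c * U)]
  -- beyond `s₀`, `Ψ << Φ` at the scale `v = 2ac` absorbs `a (1 + s) ≤ (s / c) v`
  have hΨΦ := (div_lt_one (hΦ.apply_pos (by positivity))).1 (hU _ hU')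
  calc Ψ (a * (1 + s)) ≤ Ψ (s / c * (2 * a * c)) := by
        refine hΨ.apply_le_apply (by positivity) ?_
        rw [show s / c * (2 * a * c) = 2 * a * s by field_simp]
        nlinarith
    _ ≤ Ψ (a * (1 + s₀)) + Φ (s / c) := hΨΦ.le.trans (le_add_of_nonneg_left (hΨ.nonneg _))

lemma OrliczWeaker.memOrliczHeart_one_add [IsFiniteMeasure P] (hweak : OrliczWeaker Ψ Φ)
    (hΦ : IsOrliczFunction Φ) (hΨ : IsOrliczFunction Ψ) {S : Ω → ℝ} (hS₀ : ∀ ω, 0 ≤ S ω)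
    (hS : luxNorm P Φ S < ∞) : MemOrliczHeart P Ψ fun ω => 1 + S ω := by
  intro a ha
  obtain ⟨c, ⟨hc₀, hc, hcI⟩, -⟩ := sInf_lt_iff.1 hS
  obtain ⟨K, hK⟩ := hweak.exists_apply_le_add hΦ hΨ ha (ENNReal.toReal_pos hc₀.ne' hc)
  calc ∫⁻ ω, ENNReal.ofReal (Ψ (a * (1 + S ω))) ∂P
      ≤ ∫⁻ ω, ENNReal.ofReal K + ENNReal.ofReal (Φ (|S ω| / c.toReal)) ∂P := by
        refine lintegral_mono fun ω => ?_
        rw [abs_of_nonneg (hS₀ ω)]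
        exact (ENNReal.ofReal_le_ofReal (hK _ (hS₀ ω))).trans ENNReal.ofReal_add_le
    _ = ENNReal.ofReal K * P univ + ∫⁻ ω, ENNReal.ofReal (Φ (|S ω| / c.toReal)) ∂P := by
        rw [lintegral_add_left measurable_const, lintegral_const]
    _ < ∞ := ENNReal.add_lt_top.2 ⟨ENNReal.mul_lt_top ENNReal.ofReal_lt_top (measure_lt_top _ _),
        hcI.trans_lt ENNReal.one_lt_top⟩

lemma MemOrliczHeart.tendsto_lintegral_apply_mul (hΨ : IsOrliczFunction Ψ) {B : Ω → ℝ}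
    (hB : MemOrliczHeart P Ψ B) {ι : Type*} {l : Filter ι} [l.IsCountablyGenerated]
    {M : ι → Ω → ℝ} (hM_meas : ∀ i, Measurable (M i)) (hM₀ : ∀ i ω, 0 ≤ M i ω)
    (hMB : ∀ i, ∀ᵐ ω ∂P, M i ω ≤ B ω) (hM : ∀ᵐ ω ∂P, Tendsto (fun i => M i ω) l (𝓝 0))
    {a : ℝ} (ha : 0 < a) :
    Tendsto (fun i => ∫⁻ ω, ENNReal.ofReal (Ψ (a * M i ω)) ∂P) l (𝓝 0) := by
  have hcont : Continuous fun u => ENNReal.ofReal (Ψ (a * u)) :=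
    ENNReal.continuous_ofReal.comp (hΨ.continuous.comp (continuous_const.mul continuous_id))
  simpa [hΨ.map_zero] using tendsto_lintegral_filter_of_dominated_convergence
    (fun ω => ENNReal.ofReal (Ψ (a * B ω)))
    (.of_forall fun i => hcont.measurable.comp (hM_meas i))
    (.of_forall fun i => (hMB i).mono fun ω hω =>
      ENNReal.ofReal_le_ofReal (hΨ.apply_le_apply (by have := hM₀ i ω; positivity) (by gcongr)))
    (hB a ha).ne (hM.mono fun ω hω => (hcont.tendsto 0).comp hω)

end OrliczHeart

section Factorization

variable {Ω : Type*} [MeasurableSpace Ω] {P : Measure Ω} {Ψ : ℝ → ℝ}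

lemma MemOrliczHeart.exists_seq_lintegral_le (hΨ : IsOrliczFunction Ψ) {B : Ω → ℝ}
    (hB : MemOrliczHeart P Ψ B) {M : ℝ → Ω → ℝ} (hM_meas : ∀ t, Measurable (M t))
    (hM₀ : ∀ t ω, 0 ≤ M t ω) (hMB : ∀ᵐ ω ∂P, ∀ t, M t ω ≤ B ω)
    (hM_lim : ∀ᵐ ω ∂P, Tendsto (fun t => M t ω) (𝓝[>] 0) (𝓝 0)) :
    ∃ d : ℕ → ℝ, (∀ n, 0 < d n) ∧ Tendsto d atTop (𝓝 0) ∧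
      ∀ n, ∫⁻ ω, ENNReal.ofReal (Ψ (2 ^ (n + 1) * M (d n) ω)) ∂P ≤ 2⁻¹ ^ n := by
  have hscale (n : ℕ) : ∃ t, t ∈ Ioo 0 ((2 : ℝ)⁻¹ ^ n) ∧
      ∫⁻ ω, ENNReal.ofReal (Ψ (2 ^ (n + 1) * M t ω)) ∂P ≤ 2⁻¹ ^ n := by
    have hI : ∀ᶠ t in 𝓝[>] (0 : ℝ), t ∈ Ioo 0 ((2 : ℝ)⁻¹ ^ n) := Ioo_mem_nhdsGT (by positivity)
    exact (hI.and ((hB.tendsto_lintegral_apply_mul hΨ hM_meas hM₀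
      (fun t => hMB.mono fun ω h => h t) hM_lim (by positivity)).eventually
      (ge_mem_nhds (ENNReal.pow_pos (by norm_num) n)))).exists
  choose d hd hd_int using hscale
  exact ⟨d, fun n => (hd n).1, squeeze_zero (fun n => (hd n).1.le) (fun n => (hd n).2.le)
    (tendsto_pow_atTop_nhds_zero_of_lt_one (by norm_num) (by norm_num)), hd_int⟩

theorem exists_le_mul_scalingSeries (hΨ : IsOrliczFunction Ψ) {M : ℝ → Ω → ℝ} {B : Ω → ℝ}
    (hM_meas : ∀ t, Measurable (M t)) (hB_meas : Measurable B) (hM₀ : ∀ t ω, 0 ≤ M t ω)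
    (hM_mono : ∀ᵐ ω ∂P, Monotone fun t => M t ω) (hMB : ∀ᵐ ω ∂P, ∀ t, M t ω ≤ B ω)
    (hM_lim : ∀ᵐ ω ∂P, Tendsto (fun t => M t ω) (𝓝[>] 0) (𝓝 0)) (hB : MemOrliczHeart P Ψ B) :
    ∃ (d : ℕ → ℝ) (ζ : Ω → ℝ), (∀ n, 0 < d n) ∧ Measurable ζ ∧ (∀ ω, B ω ≤ ζ ω) ∧
      ∫⁻ ω, ENNReal.ofReal (Ψ (ζ ω)) ∂P < ∞ ∧
      ∀ᵐ ω ∂P, ∀ t, 0 < t → M t ω ≤ ζ ω * scalingSeries d t := by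
  obtain ⟨d, hd₀, hd_lim, hd_int⟩ := hB.exists_seq_lintegral_le hΨ hM_meas hM₀ hMB hM_lim
  set G : ℕ → Ω → ℝ := fun n ω => 2 ^ (n + 1) * M (d n) ω
  have hG_meas (n : ℕ) : Measurable fun ω => ENNReal.ofReal (Ψ (G n ω)) :=
    (hΨ.continuous.measurable.comp ((hM_meas _).const_mul _)).ennreal_ofReal
  have hG_int : ∫⁻ ω, ∑' n, ENNReal.ofReal (Ψ (G n ω)) ∂P ≠ ∞ := by
    rw [lintegral_tsum fun n => (hG_meas n).aemeasurable]
    exact ne_top_of_le_ne_top (by simp) (ENNReal.tsum_le_tsum hd_int)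
  have hG_bdd : ∀ᵐ ω ∂P, BddAbove (range fun n => G n ω) := by
    filter_upwards [ae_lt_top' (Measurable.tsum hG_meas).aemeasurable hG_int] with ω hω
    refine hΨ.bddAbove_range_of_summable ?_
    simpa [ENNReal.toReal_ofReal (hΨ.nonneg _)] using ENNReal.summable_toReal hω.ne
  have hG₀ (n : ℕ) (ω : Ω) : 0 ≤ G n ω := by have := hM₀ (d n) ω; positivity
  set ζ : Ω → ℝ := fun ω => max (B ω) (⨆ n, G n ω)
  have hζ_int : ∫⁻ ω, ENNReal.ofReal (Ψ (ζ ω)) ∂P < ∞ := by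
    calc ∫⁻ ω, ENNReal.ofReal (Ψ (ζ ω)) ∂P
        ≤ ∫⁻ ω, ENNReal.ofReal (Ψ (B ω)) + ∑' n, ENNReal.ofReal (Ψ (G n ω)) ∂P := by
          refine lintegral_mono fun ω => ?_
          rcases max_choice (B ω) (⨆ n, G n ω) with h | h <;> simp only [ζ, h]
          · exact le_self_add
          · exact (hΨ.ofReal_apply_iSup_le_tsum (hG₀ · ω)).trans le_add_self
      _ = ∫⁻ ω, ENNReal.ofReal (Ψ (B ω)) ∂P + ∫⁻ ω, ∑' n, ENNReal.ofReal (Ψ (G n ω)) ∂P :=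
          lintegral_add_left (hΨ.continuous.measurable.comp hB_meas).ennreal_ofReal _
      _ < ∞ := ENNReal.add_lt_top.2 ⟨by simpa using hB 1 one_pos, hG_int.lt_top⟩
  refine ⟨d, ζ, hd₀, hB_meas.max (.iSup fun n => (hM_meas _).const_mul _),
    fun ω => le_max_left _ _, hζ_int, ?_⟩
  filter_upwards [hG_bdd, hM_mono, hMB] with ω hbdd hmono hMBω t ht
  exact le_mul_scalingSeries hmono hMBω (le_max_left _ _)
    ((Real.iSup_nonneg (hG₀ · ω)).trans (le_max_right _ _)) hd₀ hd_lim
    (fun n => (le_ciSup hbdd n).trans (le_max_right _ _)) ht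

end Factorization

section PairModulus

variable {X : Type*} [MetricSpace X]

lemma modCont_zero_le (f : X → ℝ) : modCont f 0 ≤ 0 :=
  Real.sSup_le (fun _ ⟨x, y, hxy, hr⟩ => by simp [hr, dist_le_zero.1 hxy]) le_rfl

noncomputable def pairModulus (s : Set X) (f : X → ℝ) (t : ℝ) : ℝ≥0∞ :=
  ⨆ (p : s × s) (_ : dist (p.1 : X) p.2 ≤ t), ‖f p.1 - f p.2‖ₑ

variable {s : Set X} {f : X → ℝ}

lemma pairModulus_mono : Monotone (pairModulus s f) := fun _ _ h =>
  iSup_mono fun _ => iSup_mono' fun hp => ⟨hp.trans h, le_rfl⟩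

lemma pairModulus_le_two_mul_iSup [CompactSpace X] (hf : Continuous f) (t : ℝ) :
    pairModulus s f t ≤ ENNReal.ofReal (2 * ⨆ x : s, |f x|) := by
  have hbdd : BddAbove (range fun x : s => |f x|) :=
    (isCompact_range hf.abs).bddAbove.mono (by rintro _ ⟨x, rfl⟩; exact ⟨x, rfl⟩)
  refine iSup₂_le fun p _ => ?_
  rw [Real.enorm_eq_ofReal_abs]
  exact ENNReal.ofReal_le_ofReal ((abs_sub _ _).trans
    (by linarith [le_ciSup hbdd p.1, le_ciSup hbdd p.2]))

lemma pairModulus_ne_top [CompactSpace X] (hf : Continuous f) (t : ℝ) : pairModulus s f t ≠ ∞ :=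
  ne_top_of_le_ne_top ENNReal.ofReal_ne_top (pairModulus_le_two_mul_iSup hf t)

lemma iSup_subtype_abs_le [CompactSpace X] (hf : Continuous f) :
    ⨆ x : s, |f x| ≤ ⨆ x, |f x| :=
  Real.iSup_le (fun x => le_ciSup (isCompact_range hf.abs).bddAbove (x : X))
    (Real.iSup_nonneg fun _ => abs_nonneg _)

lemma tendsto_pairModulus_zero [CompactSpace X] (hf : Continuous f) :
    Tendsto (pairModulus s f) (𝓝 0) (𝓝 0) := by
  refine ENNReal.tendsto_nhds_zero.2 fun ε hε => ?_
  obtain ⟨r, -, hr₀, hrε⟩ := ENNReal.lt_iff_exists_real_btwn.1 hε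
  obtain ⟨η, hη, hf_unif⟩ := Metric.uniformContinuous_iff.1
    (CompactSpace.uniformContinuous_of_continuous hf) _ (ENNReal.ofReal_pos.1 hr₀)
  filter_upwards [Iio_mem_nhds hη] with t ht
  refine iSup₂_le fun p hp => (le_of_lt ?_).trans hrε.le
  rw [Real.enorm_eq_ofReal_abs, ← Real.dist_eq]
  exact (ENNReal.ofReal_lt_ofReal_iff (ENNReal.ofReal_pos.1 hr₀)).2 (hf_unif (hp.trans_lt ht))

lemma measurable_pairModulus {Ω : Type*} [MeasurableSpace Ω] (hs : s.Countable)
    {ξ : X → Ω → ℝ} (hξ : ∀ x, Measurable (ξ x)) (t : ℝ) :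
    Measurable fun ω => pairModulus s (fun x => ξ x ω) t := by
  have := hs.to_subtype
  exact .iSup fun p => .iSup_Prop _ ((hξ p.1).sub (hξ p.2)).enorm

/-- Continuity lets the pairs of the dense set `s` at distance `< t` approximate any pair at
distance `≤ δ < t`. -/
lemma modCont_le_toReal_pairModulus (hs : Dense s) (hf : Continuous f) {δ t : ℝ}
    (hfin : pairModulus s f t ≠ ∞) (hδt : δ < t) : modCont f δ ≤ (pairModulus s f t).toReal := by
  refine Real.sSup_le ?_ ENNReal.toReal_nonneg
  rintro _ ⟨x, y, hxy, rfl⟩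
  set U := {p : X × X | dist p.1 p.2 < t}
  set D := range (Prod.map ((↑) : s → X) ((↑) : s → X))
  have hxy' : (x, y) ∈ closure (U ∩ D) :=
    (hs.denseRange_val.prodMap hs.denseRange_val).open_subset_closure_inter
      (isOpen_lt continuous_dist continuous_const) (hxy.trans_lt hδt)
  have hmaps :
      MapsTo (fun p : X × X => |f p.1 - f p.2|) (U ∩ D) (Iic (pairModulus s f t).toReal) := by
    rintro _ ⟨hpt, ⟨a, b⟩, rfl⟩
    rw [mem_Iic, ← ENNReal.ofReal_le_iff_le_toReal hfin, ← Real.enorm_eq_ofReal_abs]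
    exact le_iSup₂ (f := fun (p : s × s) (_ : dist (p.1 : X) p.2 ≤ t) => ‖f p.1 - f p.2‖ₑ)
      (a, b) hpt.le
  simpa using map_mem_closure (by fun_prop) hxy' hmaps

end PairModulus

theorem exists_modCont_le_mul {X Ω : Type*} [MetricSpace X] [CompactSpace X] [MeasurableSpace Ω]
    {P : Measure Ω} {Ψ : ℝ → ℝ} (hΨ : IsOrliczFunction Ψ) {ξ : X → Ω → ℝ}
    (hξ : ∀ x, Measurable (ξ x)) (hcont : ∀ᵐ ω ∂P, Continuous fun x => ξ x ω)
    (hheart : MemOrliczHeart P Ψ fun ω => 1 + ⨆ x, |ξ x ω|) :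
    ∃ (h : ℝ → ℝ) (ζ : Ω → ℝ), (∀ D, IsScalingFunction h D) ∧ Measurable ζ ∧ (∀ ω, 1 ≤ ζ ω) ∧
      ∫⁻ ω, ENNReal.ofReal (Ψ (ζ ω)) ∂P < ∞ ∧
      ∀ᵐ ω ∂P, ∀ δ, 0 ≤ δ → modCont (fun x => ξ x ω) δ ≤ ζ ω * h δ := by
  obtain ⟨s, hs_count, hs_dense⟩ := TopologicalSpace.exists_countable_dense X
  have := hs_count.to_subtype
  set S : Ω → ℝ := fun ω => ⨆ x : s, |ξ x ω|
  have hS₀ (ω : Ω) : 0 ≤ S ω := Real.iSup_nonneg fun _ => abs_nonneg _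
  set M : ℝ → Ω → ℝ := fun t ω => (pairModulus s (fun x => ξ x ω) (2 * t)).toReal
  have hM_mono : ∀ᵐ ω ∂P, Monotone fun t => M t ω := by
    filter_upwards [hcont] with ω hω t t' h
    exact ENNReal.toReal_mono (pairModulus_ne_top hω _) (pairModulus_mono (by linarith))
  have hMB : ∀ᵐ ω ∂P, ∀ t, M t ω ≤ 2 * (1 + S ω) := by
    filter_upwards [hcont] with ω hω t
    exact ENNReal.toReal_le_of_le_ofReal (by linarith [hS₀ ω])
      ((pairModulus_le_two_mul_iSup hω _).trans (ENNReal.ofReal_le_ofReal (by linarith)))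
  have hM_lim : ∀ᵐ ω ∂P, Tendsto (fun t => M t ω) (𝓝[>] 0) (𝓝 0) := by
    filter_upwards [hcont] with ω hω
    have h2t : Tendsto (fun t : ℝ => 2 * t) (𝓝[>] 0) (𝓝 0) :=
      tendsto_nhdsWithin_of_tendsto_nhds ((continuous_const_mul 2).tendsto' 0 0 (mul_zero 2))
    exact (ENNReal.tendsto_toReal ENNReal.zero_ne_top).comp ((tendsto_pairModulus_zero hω).comp h2t)
  have hB : MemOrliczHeart P Ψ fun ω => 2 * (1 + S ω) :=
    (hheart.const_mul two_pos).mono hΨ (fun ω => by linarith [hS₀ ω])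
      (hcont.mono fun ω hω => by linarith [iSup_subtype_abs_le (s := s) hω])
  obtain ⟨d, ζ, hd, hζ_meas, hBζ, hζ_int, hMζ⟩ :=
    exists_le_mul_scalingSeries hΨ (B := fun ω => 2 * (1 + S ω))
    (fun t => (measurable_pairModulus hs_count hξ _).ennreal_toReal)
    (measurable_const.mul (measurable_const.add (.iSup fun x : s => (hξ x).abs)))
    (fun _ _ => ENNReal.toReal_nonneg) hM_mono hMB hM_lim hB
  refine ⟨scalingSeries d, ζ, isScalingFunction_scalingSeries fun n => (hd n).le, hζ_meas,
    fun ω => by linarith [hBζ ω, hS₀ ω], hζ_int, ?_⟩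
  filter_upwards [hcont, hMζ] with ω hω hMω δ hδ
  rcases hδ.eq_or_lt with rfl | hδ
  · simpa [scalingSeries_zero] using modCont_zero_le _
  · exact (modCont_le_toReal_pairModulus hs_dense hω (pairModulus_ne_top hω _) (by linarith)).trans
      (hMω δ hδ)

theorem factorable_continuity_orlicz_general_general
    {X Ω : Type*} [MetricSpace X] [CompactSpace X]
    [MeasurableSpace X] [MeasurableSpace Ω]
    (P : Measure Ω) [IsProbabilityMeasure P]
    (ξ : X → Ω → ℝ)
    (hmeas : Measurable fun p : X × Ω => ξ p.1 p.2)
    (hcont : ∀ᵐ ω ∂P, Continuous fun x => ξ x ω)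
    (Φ Ψ : ℝ → ℝ) (hΦ : IsOrliczFunction Φ) (hΨ : IsOrliczFunction Ψ)
    (hweak : OrliczWeaker Ψ Φ)
    (hfin : luxNorm P Φ (fun ω => ⨆ x : X, |ξ x ω|) < ∞) :
    ∃ (h : ℝ → ℝ) (ζ : Ω → ℝ),
      IsScalingFunction h (Metric.diam (Set.univ : Set X)) ∧
      Measurable ζ ∧ (∀ ω, 0 ≤ ζ ω) ∧ luxNorm P Ψ ζ = 1 ∧
      ∀ᵐ ω ∂P, ∀ δ ∈ Set.Icc (0 : ℝ) (Metric.diam (Set.univ : Set X)),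
        modCont (fun x => ξ x ω) δ ≤ ζ ω * h δ := by
  obtain ⟨h, ζ, hh, hζ_meas, hζ₁, hζ_int, hmod⟩ :=
    exists_modCont_le_mul hΨ (fun x => hmeas.comp measurable_prodMk_left) hcont
      (hweak.memOrliczHeart_one_add hΦ hΨ (fun ω => Real.iSup_nonneg fun _ => abs_nonneg _) hfin)
  set L := luxNorm P Ψ ζ
  have hL₀ : L ≠ 0 := ne_bot_of_le_ne_bot (luxNorm_const_ne_zero hΨ one_pos)
    (luxNorm_mono_ae hΨ (.of_forall fun ω => by
      simpa [abs_of_nonneg (zero_le_one.trans (hζ₁ ω))] using hζ₁ ω))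
  have hL : L ≠ ∞ := luxNorm_ne_top_of_lintegral_ne_top hΨ hζ_int.ne
  have hLr : 0 < L.toReal := ENNReal.toReal_pos hL₀ hL
  refine ⟨fun δ => L.toReal * h δ, fun ω => ζ ω / L.toReal, (hh _).const_mul hLr.le,
    hζ_meas.div_const _, fun ω => div_nonneg (zero_le_one.trans (hζ₁ ω)) hLr.le, ?_, ?_⟩
  · rw [luxNorm_div_const ζ hLr, ENNReal.ofReal_toReal hL, ENNReal.inv_mul_cancel hL₀ hL]
  · filter_upwards [hmod] with ω hω δ hδ
    calc modCont (fun x => ξ x ω) δ ≤ ζ ω * h δ := hω δ hδ.1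
      _ = ζ ω / L.toReal * (L.toReal * h δ) := by field_simp

/-- factorable continuity with a normed factor in `L(Ψ)` for an Orlicz
function `Ψ` weaker than `Φ` (no `Δ₂` condition assumed on `Φ`). -/
theorem factorable_continuity_orlicz_general
    {X Ω : Type*} [MetricSpace X] [CompactSpace X]
    [MeasurableSpace X] [BorelSpace X] [MeasurableSpace Ω]
    (P : Measure Ω) [IsProbabilityMeasure P]
    (ξ : X → Ω → ℝ)
    (hmeas : Measurable fun p : X × Ω => ξ p.1 p.2)
    (hcont : ∀ᵐ ω ∂P, Continuous fun x => ξ x ω)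
    (Φ Ψ : ℝ → ℝ) (hΦ : IsOrliczFunction Φ) (hΨ : IsOrliczFunction Ψ)
    (hweak : OrliczWeaker Ψ Φ)
    (hfin : luxNorm P Φ (fun ω => ⨆ x : X, |ξ x ω|) < ∞) :
    ∃ (h : ℝ → ℝ) (ζ : Ω → ℝ),
      IsScalingFunction h (Metric.diam (Set.univ : Set X)) ∧
      Measurable ζ ∧ (∀ ω, 0 ≤ ζ ω) ∧ luxNorm P Ψ ζ = 1 ∧
      ∀ᵐ ω ∂P, ∀ δ ∈ Set.Icc (0 : ℝ) (Metric.diam (Set.univ : Set X)),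
        modCont (fun x => ξ x ω) δ ≤ ζ ω * h δ :=
  factorable_continuity_orlicz_general_general P ξ hmeas hcont Φ Ψ hΦ hΨ hweak hfin
end

section
/- Let (X,d) be a compact metric space, p ≥ 1 a constant, and ξ = ξ(x,ω) a jointly measurable random field on X with almost surely continuous sample paths such that sup_{x∈X} |ξ(x)|_p = 1. Suppose there exist constants α ∈ (0,1] and C₁ > 0 such that θ_p(δ) := |Δ(ξ,δ)|_p ≤ C₁ δ^α for all δ ∈ (0, 1/e). Then for every θ > 0 and ν > 0 there exist a constant C₂ = C₂(α,p,C₁) and a non-negative random variable τ with E τ^p = 1 such that, almost surely, for all δ ∈ (0,1/e): Δ(ξ,δ) ≤ C₂ · τ · δ^{αθ/(1+θ)} · (1+θ)^{−(1+ν)} · |ln δ|^{1+ν}. -/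
/-!
Restricted to a countable dense set of pairs at distance `< r`, the modulus of continuity becomes a
measurable supremum that still dominates `Δ(ξ, δ)` for every `δ < r`. At the scales
`ρₙ = e^{-(n+1)}` the hypothesis gives `E Δ(ξ, ρₙ)ᵖ ≤ (C₁ ρₙ^α)ᵖ` (at `ρ₀ = e^{-1}`, outside its
range, by monotone convergence from the left), so after dividing `Δ(ξ, ρₙ)` by
`cₙ = C₁ ρₙ^α (n+1)^{1+ν}` the `p`-th moments are summable and the supremum `V` of the rescaled
moduli lies in `Lᵖ`; `τ` is `max V 1` normalized. For `δ ∈ [ρₙ₊₁, ρₙ)` one has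
`cₙ ≤ e^α C₁ δ^α |log δ|^{1+ν}`, and `δ^α ≤ δ^{αθ/(1+θ)}`.
-/

open MeasureTheory Filter Set
open scoped ENNReal NNReal

/-- The `p`-th moment norm `|ζ|_p = (E |ζ|^p)^{1/p}`. -/
noncomputable def pMom {Ω : Type*} [MeasurableSpace Ω] (P : Measure Ω)
    (p : ℝ) (ζ : Ω → ℝ) : ℝ≥0∞ :=
  (∫⁻ ω, ENNReal.ofReal (|ζ ω| ^ p) ∂P) ^ (1 / p)

open Topology

section ModulusOfContinuity

variable {X : Type*} [MetricSpace X] {f : X → ℝ} {S : Set X} {x y : X} {δ r M : ℝ}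

lemma le_modCont {B : ℝ} (hB : ∀ x, |f x| ≤ B) (h : dist x y ≤ δ) :
    |f x - f y| ≤ modCont f δ := by
  refine le_csSup ⟨B + B, ?_⟩ ⟨x, y, h, rfl⟩
  rintro _ ⟨x', y', -, rfl⟩
  exact (abs_sub _ _).trans (add_le_add (hB x') (hB y'))

lemma modCont_le (hM : 0 ≤ M) (h : ∀ x y, dist x y ≤ δ → |f x - f y| ≤ M) :
    modCont f δ ≤ M :=
  Real.sSup_le (by rintro _ ⟨x, y, hxy, rfl⟩; exact h x y hxy) hM

/-- Countable `S` makes this measurable in a random field; the strict inequality makes it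
left-continuous in `r` and lets it bound `modCont f δ` for every `δ < r` when `S` is dense. -/
noncomputable def modContOn (S : Set X) (f : X → ℝ) (r : ℝ) : ℝ≥0∞ :=
  ⨆ (x : S) (y : S) (_ : dist (x : X) y < r), ENNReal.ofReal |f x - f y|

lemma modContOn_mono : Monotone (modContOn S f) := fun _ _ hrs =>
  iSup₂_mono fun _ _ => iSup_mono' fun h => ⟨h.trans_le hrs, le_rfl⟩

lemma modContOn_le_ofReal_modCont {B : ℝ} (hB : ∀ x, |f x| ≤ B) :
    modContOn S f r ≤ ENNReal.ofReal (modCont f r) :=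
  iSup₂_le fun _ _ => iSup_le fun h => ENNReal.ofReal_le_ofReal (le_modCont hB h.le)

lemma modContOn_le_iSup_of_tendsto {s : ℕ → ℝ} (hs : Tendsto s atTop (𝓝 r)) :
    modContOn S f r ≤ ⨆ k, modContOn S f (s k) :=
  iSup₂_le fun x y => iSup_le fun h => by
    obtain ⟨k, hk⟩ := (hs.eventually (lt_mem_nhds h)).exists
    exact le_iSup_of_le k (le_iSup₂_of_le x y (le_iSup_of_le hk le_rfl))

lemma ofReal_abs_sub_le_modContOn (hS : Dense S) (hf : Continuous f) (h : dist x y < r) :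
    ENNReal.ofReal |f x - f y| ≤ modContOn S f r := by
  let U : Set (X × X) := {q | dist q.1 q.2 < r}
  have hU : IsOpen U := isOpen_lt continuous_dist continuous_const
  have hclosed : IsClosed {q : X × X | ENNReal.ofReal |f q.1 - f q.2| ≤ modContOn S f r} :=
    isClosed_le (ENNReal.continuous_ofReal.comp (by fun_prop)) continuous_const
  have hsub : U ∩ S ×ˢ S ⊆ {q | ENNReal.ofReal |f q.1 - f q.2| ≤ modContOn S f r} :=
    fun q ⟨hq, h1, h2⟩ => by
      show ENNReal.ofReal |f q.1 - f q.2| ≤ _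
      exact le_iSup₂_of_le (⟨q.1, h1⟩ : S) (⟨q.2, h2⟩ : S) (le_iSup_of_le hq le_rfl)
  exact hclosed.closure_subset_iff.2 hsub
    ((hS.prod hS).open_subset_closure_inter hU (show (x, y) ∈ U from h))

lemma modCont_le_of_modContOn_le (hS : Dense S) (hf : Continuous f) (hδr : δ < r) (hM : 0 ≤ M)
    (h : modContOn S f r ≤ ENNReal.ofReal M) : modCont f δ ≤ M :=
  modCont_le hM fun _ _ hxy => (ENNReal.ofReal_le_ofReal_iff hM).1
    ((ofReal_abs_sub_le_modContOn hS hf (hxy.trans_lt hδr)).trans h)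

lemma measurable_modContOn {Ω : Type*} [MeasurableSpace Ω] {ξ : X → Ω → ℝ} (hS : S.Countable)
    (hξ : ∀ x, Measurable (ξ x)) (r : ℝ) : Measurable fun ω => modContOn S (ξ · ω) r := by
  have := hS.to_subtype
  exact Measurable.iSup fun x => Measurable.iSup fun y =>
    Measurable.iSup_Prop _ ((hξ x).sub (hξ y)).abs.ennreal_ofReal

end ModulusOfContinuity

section Moments

variable {Ω : Type*} [MeasurableSpace Ω] {P : Measure Ω} {p : ℝ}

lemma ENNReal.iSup_rpow {ι : Sort*} (f : ι → ℝ≥0∞) (hp : 0 < p) :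
    (⨆ i, f i) ^ p = ⨆ i, f i ^ p :=
  (ENNReal.orderIsoRpow p hp).map_iSup f

lemma lintegral_rpow_le_pMom_rpow {Z : Ω → ℝ≥0∞} {ζ : Ω → ℝ} (hp : 0 < p)
    (h : ∀ᵐ ω ∂P, Z ω ≤ ENNReal.ofReal (ζ ω)) : ∫⁻ ω, Z ω ^ p ∂P ≤ pMom P p ζ ^ p := by
  rw [pMom, ← ENNReal.rpow_mul, one_div_mul_cancel hp.ne', ENNReal.rpow_one]
  refine lintegral_mono_ae (h.mono fun ω hω => ?_)
  rw [← ENNReal.ofReal_rpow_of_nonneg (abs_nonneg _) hp.le]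
  exact ENNReal.rpow_le_rpow (hω.trans (ENNReal.ofReal_le_ofReal (le_abs_self _))) hp.le

lemma lintegral_iSup_rpow_le_tsum {Z : ℕ → Ω → ℝ≥0∞} (hp : 0 < p)
    (hZ : ∀ n, AEMeasurable (Z n) P) :
    ∫⁻ ω, (⨆ n, Z n ω) ^ p ∂P ≤ ∑' n, ∫⁻ ω, Z n ω ^ p ∂P := by
  rw [← lintegral_tsum fun n => (hZ n).pow_const p]
  refine lintegral_mono fun ω => ?_
  rw [ENNReal.iSup_rpow _ hp]
  exact iSup_le fun n => ENNReal.le_tsum n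

lemma lintegral_inv_mul_rpow_le {Z : Ω → ℝ≥0∞} {a b : ℝ} (hp : 0 ≤ p) (ha : 0 < a)
    (hZ : ∫⁻ ω, Z ω ^ p ∂P ≤ ENNReal.ofReal (a * b) ^ p) :
    ∫⁻ ω, ((ENNReal.ofReal a)⁻¹ * Z ω) ^ p ∂P ≤ ENNReal.ofReal b ^ p := by
  have ha0 : ENNReal.ofReal a ≠ 0 := (ENNReal.ofReal_pos.2 ha).ne'
  simp_rw [ENNReal.mul_rpow_of_nonneg _ _ hp]
  rw [lintegral_const_mul' _ _ (ENNReal.rpow_ne_top_of_nonneg hp (ENNReal.inv_ne_top.2 ha0)),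
    ENNReal.inv_rpow, ENNReal.inv_mul_le_iff (ENNReal.rpow_pos (ENNReal.ofReal_pos.2 ha)
      ENNReal.ofReal_ne_top).ne' (ENNReal.rpow_ne_top_of_nonneg hp ENNReal.ofReal_ne_top),
    ← ENNReal.mul_rpow_of_nonneg _ _ hp, ← ENNReal.ofReal_mul ha.le]
  exact hZ

lemma exists_le_ofReal_mul_of_lintegral_rpow_ne_top [IsProbabilityMeasure P] {V : Ω → ℝ≥0∞}
    (hp : 0 < p) (hV : Measurable V) (hVp : ∫⁻ ω, V ω ^ p ∂P ≠ ∞) :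
    ∃ c : ℝ, 0 < c ∧ ∃ τ : Ω → ℝ, Measurable τ ∧ (∀ ω, 0 ≤ τ ω) ∧
      ∫⁻ ω, ENNReal.ofReal (τ ω ^ p) ∂P = 1 ∧ ∀ᵐ ω ∂P, V ω ≤ ENNReal.ofReal (c * τ ω) := by
  set W : Ω → ℝ≥0∞ := fun ω => V ω ⊔ 1
  have hW : Measurable W := hV.sup measurable_const
  have hWp_ge : 1 ≤ ∫⁻ ω, W ω ^ p ∂P := by
    calc (1 : ℝ≥0∞) = ∫⁻ _, 1 ∂P := by simp
      _ ≤ ∫⁻ ω, W ω ^ p ∂P :=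
        lintegral_mono fun ω => ENNReal.one_le_rpow le_sup_right hp
  have hWp_le : ∫⁻ ω, W ω ^ p ∂P ≤ ∫⁻ ω, V ω ^ p ∂P + 1 := by
    calc ∫⁻ ω, W ω ^ p ∂P ≤ ∫⁻ ω, V ω ^ p + 1 ∂P := lintegral_mono fun ω => by
          rw [(ENNReal.monotone_rpow_of_nonneg hp.le).map_sup, ENNReal.one_rpow]
          exact sup_le le_self_add le_add_self
      _ = ∫⁻ ω, V ω ^ p ∂P + 1 := by rw [lintegral_add_right _ measurable_const]; simp
  have hWp0 : ∫⁻ ω, W ω ^ p ∂P ≠ 0 := (zero_lt_one.trans_le hWp_ge).ne'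
  have hWptop : ∫⁻ ω, W ω ^ p ∂P ≠ ∞ := (hWp_le.trans_lt (by finiteness)).ne
  set N : ℝ≥0∞ := (∫⁻ ω, W ω ^ p ∂P) ^ (1 / p)
  set g := ENNReal.funMulInvSnorm W p P
  have hg : Measurable g := hW.mul_const _
  have hg1 : ∫⁻ ω, g ω ^ p ∂P = 1 := ENNReal.lintegral_rpow_funMulInvSnorm_eq_one hp hWp0 hWptop
  have hg_top : ∀ᵐ ω ∂P, g ω ≠ ∞ := by
    have := ae_lt_top (hg.pow_const p) (hg1.symm ▸ ENNReal.one_ne_top)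
    exact this.mono fun ω hω => ((ENNReal.rpow_lt_top_iff_of_pos hp).1 hω).ne
  refine ⟨N.toReal, ENNReal.toReal_pos (by positivity) (by finiteness), fun ω => (g ω).toReal,
    hg.ennreal_toReal, fun ω => ENNReal.toReal_nonneg, ?_, ?_⟩
  · rw [← hg1]
    refine lintegral_congr_ae (hg_top.mono fun ω hω => ?_)
    dsimp only
    rw [← ENNReal.ofReal_rpow_of_nonneg ENNReal.toReal_nonneg hp.le, ENNReal.ofReal_toReal hω]
  · filter_upwards [hg_top] with ω hω
    rw [ENNReal.ofReal_mul ENNReal.toReal_nonneg, ENNReal.ofReal_toReal (by finiteness),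
      ENNReal.ofReal_toReal hω, mul_comm,
      ← ENNReal.fun_eq_funMulInvSnorm_mul_eLpNorm W hWp0 hWptop]
    exact le_sup_left

end Moments

section RandomField

variable {X Ω : Type*} [MetricSpace X] [MeasurableSpace Ω] {P : Measure Ω} {p r : ℝ}
  {ξ : X → Ω → ℝ} {S : Set X}

lemma lintegral_modContOn_rpow_le_of_forall_lt (hS : S.Countable) (hξ : ∀ x, Measurable (ξ x))
    (hp : 0 < p) (hr : 0 < r) {M : ℝ≥0∞}
    (h : ∀ s ∈ Ioo 0 r, ∫⁻ ω, modContOn S (ξ · ω) s ^ p ∂P ≤ M) :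
    ∫⁻ ω, modContOn S (ξ · ω) r ^ p ∂P ≤ M := by
  obtain ⟨s, hs_mono, hs_mem, hs_lim⟩ := exists_seq_strictMono_tendsto' hr
  calc ∫⁻ ω, modContOn S (ξ · ω) r ^ p ∂P
      ≤ ∫⁻ ω, ⨆ k, modContOn S (ξ · ω) (s k) ^ p ∂P := lintegral_mono fun ω => by
        rw [← ENNReal.iSup_rpow _ hp]
        exact ENNReal.rpow_le_rpow (modContOn_le_iSup_of_tendsto hs_lim) hp.le
    _ = ⨆ k, ∫⁻ ω, modContOn S (ξ · ω) (s k) ^ p ∂P :=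
        lintegral_iSup (fun k => (measurable_modContOn hS hξ _).pow_const p)
          fun _ _ hkl ω => ENNReal.rpow_le_rpow (modContOn_mono (hs_mono.monotone hkl)) hp.le
    _ ≤ M := iSup_le fun k => h _ (hs_mem k)

lemma lintegral_modContOn_rpow_le [CompactSpace X] (hS : S.Countable)
    (hξ : ∀ x, Measurable (ξ x)) (hcont : ∀ᵐ ω ∂P, Continuous (ξ · ω)) (hp : 0 < p)
    {α C₁ : ℝ} (hα : 0 ≤ α) (hC₁ : 0 ≤ C₁)
    (hΔ : ∀ δ ∈ Ioo (0 : ℝ) (Real.exp (-1)),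
      pMom P p (fun ω => modCont (ξ · ω) δ) ≤ ENNReal.ofReal (C₁ * δ ^ α))
    (hr : r ∈ Ioc 0 (Real.exp (-1))) :
    ∫⁻ ω, modContOn S (ξ · ω) r ^ p ∂P ≤ ENNReal.ofReal (C₁ * r ^ α) ^ p := by
  refine lintegral_modContOn_rpow_le_of_forall_lt hS hξ hp hr.1 fun s hs => ?_
  have hbound : ∀ᵐ ω ∂P, modContOn S (ξ · ω) s ≤ ENNReal.ofReal (modCont (ξ · ω) s) :=
    hcont.mono fun ω hω => by
      obtain ⟨B, hB⟩ := isCompact_univ.exists_bound_of_continuousOn hω.continuousOn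
      exact modContOn_le_ofReal_modCont fun x => hB x (mem_univ x)
  calc ∫⁻ ω, modContOn S (ξ · ω) s ^ p ∂P ≤ pMom P p (fun ω => modCont (ξ · ω) s) ^ p :=
        lintegral_rpow_le_pMom_rpow hp hbound
    _ ≤ ENNReal.ofReal (C₁ * s ^ α) ^ p :=
        ENNReal.rpow_le_rpow (hΔ s ⟨hs.1, hs.2.trans_le hr.2⟩) hp.le
    _ ≤ ENNReal.ofReal (C₁ * r ^ α) ^ p := by gcongr; exacts [hs.1.le, hs.2.le]

end RandomField

lemma exists_nat_exp_neg_succ_gt {δ α : ℝ} (hδ : δ ∈ Ioo 0 (Real.exp (-1))) (hα : 0 ≤ α) :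
    ∃ n : ℕ, δ < Real.exp (-(n + 1)) ∧ Real.exp (-(n + 1)) ^ α ≤ Real.exp α * δ ^ α ∧
      (n : ℝ) + 1 ≤ |Real.log δ| := by
  have hlog : Real.log δ < -1 := by
    simpa using Real.log_lt_log hδ.1 hδ.2
  set L := -Real.log δ
  have hL1 : 1 < L := by linarith
  have hceil : ⌈L⌉₊ < L + 1 := Nat.ceil_lt_add_one (by linarith)
  have hceil2 : 2 ≤ ⌈L⌉₊ := by
    have : (1 : ℝ) < ⌈L⌉₊ := hL1.trans_le (Nat.le_ceil L)
    exact_mod_cast this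
  refine ⟨⌈L⌉₊ - 2, ?_, ?_, ?_⟩ <;> push_cast [hceil2]
  · rw [← Real.exp_log hδ.1, Real.exp_lt_exp]; linarith
  · rw [← Real.exp_mul, ← Real.exp_log hδ.1, Real.rpow_def_of_pos (Real.exp_pos _), Real.log_exp,
      ← Real.exp_add, Real.exp_le_exp]
    nlinarith [Nat.le_ceil L]
  · rw [abs_of_neg (by linarith)]; linarith

theorem exists_modCont_le_mul_rpow_mul_abs_log_rpow {X Ω : Type*} [MetricSpace X]
    [CompactSpace X] [MeasurableSpace Ω] {P : Measure Ω} [IsProbabilityMeasure P] {p : ℝ}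
    (hp : 1 ≤ p) {ξ : X → Ω → ℝ} (hξ : ∀ x, Measurable (ξ x))
    (hcont : ∀ᵐ ω ∂P, Continuous (ξ · ω)) {α C₁ ν : ℝ} (hα : 0 ≤ α) (hC₁ : 0 < C₁)
    (hΔ : ∀ δ ∈ Ioo (0 : ℝ) (Real.exp (-1)),
      pMom P p (fun ω => modCont (ξ · ω) δ) ≤ ENNReal.ofReal (C₁ * δ ^ α))
    (hν : 0 < ν) :
    ∃ C : ℝ, 0 < C ∧ ∃ τ : Ω → ℝ, Measurable τ ∧ (∀ ω, 0 ≤ τ ω) ∧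
      ∫⁻ ω, ENNReal.ofReal (τ ω ^ p) ∂P = 1 ∧
      ∀ᵐ ω ∂P, ∀ δ ∈ Ioo (0 : ℝ) (Real.exp (-1)),
        modCont (ξ · ω) δ ≤ C * τ ω * δ ^ α * |Real.log δ| ^ (1 + ν) := by
  obtain ⟨S, hS, hSd⟩ := TopologicalSpace.exists_countable_dense X
  have hp0 : 0 < p := by linarith
  set ρ : ℕ → ℝ := fun n => Real.exp (-(n + 1))
  set w : ℕ → ℝ := fun n => ((n : ℝ) + 1) ^ (-(1 + ν))
  set c : ℕ → ℝ := fun n => C₁ * ρ n ^ α * ((n : ℝ) + 1) ^ (1 + ν)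
  have hc : ∀ n, 0 < c n := fun n => by positivity
  have hcw : ∀ n, C₁ * ρ n ^ α = c n * w n := fun n => by
    rw [mul_assoc, ← Real.rpow_add (by positivity), add_neg_cancel, Real.rpow_zero, mul_one]
  have hmom : ∀ n, ∫⁻ ω, ((ENNReal.ofReal (c n))⁻¹ * modContOn S (ξ · ω) (ρ n)) ^ p ∂P ≤
      ENNReal.ofReal (w n) ^ p := fun n =>
    lintegral_inv_mul_rpow_le hp0.le (hc n) (hcw n ▸ lintegral_modContOn_rpow_le hS hξ hcont hp0
      hα hC₁.le hΔ ⟨by positivity, Real.exp_le_exp.2 (by linarith [n.cast_nonneg (α := ℝ)])⟩)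
  have hsum : ∑' n, ENNReal.ofReal (w n) ^ p ≠ ∞ := by
    have := (Real.summable_one_div_nat_add_rpow 1 ((1 + ν) * p)).2 (by nlinarith)
    refine ne_of_eq_of_ne (tsum_congr fun n => ?_) this.tsum_ofReal_ne_top
    rw [ENNReal.ofReal_rpow_of_nonneg (by positivity) hp0.le, ← Real.rpow_mul (by positivity),
      abs_of_pos (by positivity), one_div, ← Real.rpow_neg (by positivity), neg_mul]
  set V : Ω → ℝ≥0∞ := fun ω => ⨆ n, (ENNReal.ofReal (c n))⁻¹ * modContOn S (ξ · ω) (ρ n)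
  have hV : ∀ n, Measurable fun ω => (ENNReal.ofReal (c n))⁻¹ * modContOn S (ξ · ω) (ρ n) :=
    fun n => (measurable_modContOn hS hξ _).const_mul _
  have hVp : ∫⁻ ω, V ω ^ p ∂P ≠ ∞ := ne_top_of_le_ne_top hsum
    ((lintegral_iSup_rpow_le_tsum hp0 fun n => (hV n).aemeasurable).trans
      (ENNReal.tsum_le_tsum hmom))
  obtain ⟨c₀, hc₀, τ, hτ, hτ0, hτp, hVτ⟩ :=
    exists_le_ofReal_mul_of_lintegral_rpow_ne_top hp0 (Measurable.iSup hV) hVp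
  refine ⟨C₁ * Real.exp α * c₀, by positivity, τ, hτ, hτ0, hτp, ?_⟩
  filter_upwards [hcont, hVτ] with ω hω hVω δ hδ
  obtain ⟨n, hδρ, hρα, hlog⟩ := exists_nat_exp_neg_succ_gt hδ hα
  have hG : modContOn S (ξ · ω) (ρ n) ≤ ENNReal.ofReal (c n * (c₀ * τ ω)) := by
    rw [ENNReal.ofReal_mul (hc n).le]
    exact (ENNReal.inv_mul_le_iff (ENNReal.ofReal_pos.2 (hc n)).ne' ENNReal.ofReal_ne_top).1
      ((le_iSup (fun n => (ENNReal.ofReal (c n))⁻¹ * modContOn S (ξ · ω) (ρ n)) n).trans hVω)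
  have hτω := hτ0 ω
  have hδ0 := hδ.1.le
  calc modCont (ξ · ω) δ ≤ c n * (c₀ * τ ω) :=
        modCont_le_of_modContOn_le hSd hω hδρ (by positivity) hG
    _ = C₁ * ρ n ^ α * ((n : ℝ) + 1) ^ (1 + ν) * (c₀ * τ ω) := rfl
    _ ≤ C₁ * (Real.exp α * δ ^ α) * |Real.log δ| ^ (1 + ν) * (c₀ * τ ω) := by gcongr
    _ = C₁ * Real.exp α * c₀ * τ ω * δ ^ α * |Real.log δ| ^ (1 + ν) := by ring

theorem factorable_estimate_Lp_with_log_general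
    {X Ω : Type*} [MetricSpace X] [CompactSpace X]
    [MeasurableSpace X] [MeasurableSpace Ω]
    (P : Measure Ω) [IsProbabilityMeasure P]
    (p : ℝ) (hp : 1 ≤ p)
    (ξ : X → Ω → ℝ)
    (hmeas : Measurable fun q : X × Ω => ξ q.1 q.2)
    (hcont : ∀ᵐ ω ∂P, Continuous fun x => ξ x ω)
    (α : ℝ) (hα : α ∈ Set.Ioc (0 : ℝ) 1) (C₁ : ℝ) (hC₁ : 0 < C₁)
    (hθp : ∀ δ ∈ Set.Ioo (0 : ℝ) (Real.exp (-1)),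
      pMom P p (fun ω => modCont (fun x => ξ x ω) δ) ≤ ENNReal.ofReal (C₁ * δ ^ α)) :
    ∀ θ : ℝ, 0 < θ → ∀ ν : ℝ, 0 < ν →
      ∃ C₂ : ℝ, 0 < C₂ ∧
        ∃ τ : Ω → ℝ, Measurable τ ∧ (∀ ω, 0 ≤ τ ω) ∧
          (∫⁻ ω, ENNReal.ofReal (τ ω ^ p) ∂P) = 1 ∧
          ∀ᵐ ω ∂P, ∀ δ ∈ Set.Ioo (0 : ℝ) (Real.exp (-1)),
            modCont (fun x => ξ x ω) δ ≤
              C₂ * τ ω * δ ^ (α * θ / (1 + θ)) * (1 + θ) ^ (-(1 + ν)) *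
                |Real.log δ| ^ (1 + ν) := by
  intro θ hθ ν hν
  obtain ⟨C, hC, τ, hτ, hτ0, hτp, hbound⟩ := exists_modCont_le_mul_rpow_mul_abs_log_rpow hp
    (fun x => hmeas.comp measurable_prodMk_left) hcont hα.1.le hC₁ hθp hν
  refine ⟨C * (1 + θ) ^ (1 + ν), by positivity, τ, hτ, hτ0, hτp, ?_⟩
  filter_upwards [hbound] with ω hω δ hδ
  have hδ1 : δ ≤ 1 := hδ.2.le.trans (Real.exp_le_one_iff.2 (by norm_num))
  have hexp : α * θ / (1 + θ) ≤ α := by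
    rw [div_le_iff₀ (by positivity)]
    nlinarith [hα.1]
  have hτω := hτ0 ω
  calc modCont (ξ · ω) δ ≤ C * τ ω * δ ^ α * |Real.log δ| ^ (1 + ν) := hω δ hδ
    _ ≤ C * τ ω * δ ^ (α * θ / (1 + θ)) * |Real.log δ| ^ (1 + ν) := by
        gcongr C * τ ω * ?_ * _
        exact Real.rpow_le_rpow_of_exponent_ge hδ.1 hδ1 hexp
    _ = C * (1 + θ) ^ (1 + ν) * τ ω * δ ^ (α * θ / (1 + θ)) * (1 + θ) ^ (-(1 + ν)) *
          |Real.log δ| ^ (1 + ν) := by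
        rw [Real.rpow_neg (by positivity)]
        field_simp

/-- quantitative factorable estimate obtained from the general
construction with `b_n = ν n⁻¹ (ln(n+1))^{-1-ν}` and `a_n = n^{-1-θ}`. -/
theorem factorable_estimate_Lp_with_log
    {X Ω : Type*} [MetricSpace X] [CompactSpace X]
    [MeasurableSpace X] [BorelSpace X] [MeasurableSpace Ω]
    (P : Measure Ω) [IsProbabilityMeasure P]
    (p : ℝ) (hp : 1 ≤ p)
    (ξ : X → Ω → ℝ)
    (hmeas : Measurable fun q : X × Ω => ξ q.1 q.2)
    (hcont : ∀ᵐ ω ∂P, Continuous fun x => ξ x ω)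
    (hsup : ⨆ x : X, pMom P p (ξ x) = 1)
    (α : ℝ) (hα : α ∈ Set.Ioc (0 : ℝ) 1) (C₁ : ℝ) (hC₁ : 0 < C₁)
    (hθp : ∀ δ ∈ Set.Ioo (0 : ℝ) (Real.exp (-1)),
      pMom P p (fun ω => modCont (fun x => ξ x ω) δ) ≤ ENNReal.ofReal (C₁ * δ ^ α)) :
    ∀ θ : ℝ, 0 < θ → ∀ ν : ℝ, 0 < ν →
      ∃ C₂ : ℝ, 0 < C₂ ∧
        ∃ τ : Ω → ℝ, Measurable τ ∧ (∀ ω, 0 ≤ τ ω) ∧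
          (∫⁻ ω, ENNReal.ofReal (τ ω ^ p) ∂P) = 1 ∧
          ∀ᵐ ω ∂P, ∀ δ ∈ Set.Ioo (0 : ℝ) (Real.exp (-1)),
            modCont (fun x => ξ x ω) δ ≤
              C₂ * τ ω * δ ^ (α * θ / (1 + θ)) * (1 + θ) ^ (-(1 + ν)) *
                |Real.log δ| ^ (1 + ν) :=
  factorable_estimate_Lp_with_log_general P p hp ξ hmeas hcont α hα C₁ hC₁ hθp
end
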